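/- Let A be a real symmetric d×d matrix and b ∈ ℝ^d with grade g with respect to A. Suppose for each k ≤ g the MINRES iterate x_k minimizes ‖b − A x‖ over K_k(A,b), with residual r_k = b − A x_k. If b ∉ range(A), then the residual r_g at the final step is nonzero and satisfies A r_g = 0; in particular ⟨r_g, A r_g⟩ = 0, i.e., r_g is a zero-curvature direction. -/

import Mathlib

/-!
The grade hypothesis forces `K_{g+1}(A,b) = K_g(A,b)`, so `K_g` contains `b` and is `A`-invariant;
hence the residual `r` lies in `K_g`. Minimality of `‖b - A x‖` over `K_g` makes `r` orthogonal to
`A K_g`, in particular `rᵀ A r = 0`, and positive semidefiniteness upgrades this to `A r = 0`.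
-/

open Matrix

noncomputable def Krylov {d : ℕ} (A : Matrix (Fin d) (Fin d) ℝ) (b : Fin d → ℝ) (k : ℕ) :
    Submodule ℝ (Fin d → ℝ) :=
  Submodule.span ℝ {v | ∃ i < k, v = (A ^ i).mulVec b}

noncomputable def enorm {d : ℕ} (v : Fin d → ℝ) : ℝ := Real.sqrt (v ⬝ᵥ v)

lemma dotProduct_self_nonneg {ι : Type*} [Fintype ι] (v : ι → ℝ) : 0 ≤ v ⬝ᵥ v :=
  Finset.sum_nonneg fun i _ => mul_self_nonneg (v i)

lemma enorm_le_enorm_iff {d : ℕ} (u v : Fin d → ℝ) :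
    _root_.enorm u ≤ _root_.enorm v ↔ u ⬝ᵥ u ≤ v ⬝ᵥ v :=
  Real.sqrt_le_sqrt_iff (dotProduct_self_nonneg v)

lemma dotProduct_eq_zero_of_forall_le_sub_smul {ι : Type*} [Fintype ι] {r w : ι → ℝ}
    (h : ∀ t : ℝ, r ⬝ᵥ r ≤ (r - t • w) ⬝ᵥ (r - t • w)) : r ⬝ᵥ w = 0 := by
  have hquad : ∀ t : ℝ, 0 ≤ (w ⬝ᵥ w) * (t * t) + (-2 * (r ⬝ᵥ w)) * t + 0 := by
    intro t
    have hexp : (r - t • w) ⬝ᵥ (r - t • w)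
        = r ⬝ᵥ r + (w ⬝ᵥ w) * (t * t) + (-2 * (r ⬝ᵥ w)) * t := by
      simp only [sub_dotProduct, dotProduct_sub, smul_dotProduct, dotProduct_smul, smul_eq_mul,
        dotProduct_comm w r]
      ring
    linarith [h t]
  have hdisc := discrim_le_zero hquad
  rw [discrim] at hdisc
  nlinarith [sq_nonneg (r ⬝ᵥ w)]

lemma dotProduct_mulVec_eq_zero_of_forall_enorm_le {m : ℕ} {ι : Type*} [Fintype ι]
    (A : Matrix (Fin m) ι ℝ) (b : Fin m → ℝ) {S : Submodule ℝ (ι → ℝ)} {x : ι → ℝ} (hx : x ∈ S)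
    (hmin : ∀ y ∈ S, _root_.enorm (b - A.mulVec x) ≤ _root_.enorm (b - A.mulVec y))
    {z : ι → ℝ} (hz : z ∈ S) : (b - A.mulVec x) ⬝ᵥ A.mulVec z = 0 := by
  refine dotProduct_eq_zero_of_forall_le_sub_smul fun t => ?_
  have hshift : b - A.mulVec (x + t • z) = b - A.mulVec x - t • A.mulVec z := by
    rw [mulVec_add, mulVec_smul]; abel
  rw [← enorm_le_enorm_iff, ← hshift]
  exact hmin _ (S.add_mem hx (S.smul_mem t hz))

section Krylov

variable {d : ℕ} (A : Matrix (Fin d) (Fin d) ℝ) (b : Fin d → ℝ)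

lemma Krylov_mono {j k : ℕ} (h : j ≤ k) : Krylov A b j ≤ Krylov A b k :=
  Submodule.span_mono fun _ ⟨i, hi, hv⟩ => ⟨i, hi.trans_le h, hv⟩

lemma self_mem_Krylov_succ (k : ℕ) : b ∈ Krylov A b (k + 1) :=
  Submodule.subset_span ⟨0, k.succ_pos, by simp⟩

lemma mulVec_mem_Krylov_succ {k : ℕ} {v : Fin d → ℝ} (hv : v ∈ Krylov A b k) :
    A.mulVec v ∈ Krylov A b (k + 1) := by
  induction hv using Submodule.span_induction with
  | mem v hv =>
      obtain ⟨i, hi, rfl⟩ := hv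
      exact Submodule.subset_span ⟨i + 1, by omega, by rw [mulVec_mulVec, pow_succ']⟩
  | zero => simp
  | add u w _ _ hu hw => rw [mulVec_add]; exact Submodule.add_mem _ hu hw
  | smul c u _ hu => rw [mulVec_smul]; exact Submodule.smul_mem _ c hu

lemma Krylov_succ_eq_of_finrank {g : ℕ}
    (hgrade : ∀ j, Module.finrank ℝ (Krylov A b j) = min j g) :
    Krylov A b (g + 1) = Krylov A b g :=
  (Submodule.eq_of_le_of_finrank_le (Krylov_mono A b g.le_succ)
    (by simp [hgrade])).symm

end Krylov

theorem stmt15 {d g : ℕ} (A : Matrix (Fin d) (Fin d) ℝ) (hA : A.PosSemidef)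
    (b : Fin d → ℝ)
    -- `g` is the grade of `b` with respect to `A`
    (hgrade : ∀ j, Module.finrank ℝ (Krylov A b j) = min j g)
    (x : ℕ → (Fin d → ℝ))
    (hmem : ∀ k ≤ g, x k ∈ Krylov A b k)
    (hmin : ∀ k ≤ g, ∀ y ∈ Krylov A b k,
      _root_.enorm (b - A.mulVec (x k)) ≤ _root_.enorm (b - A.mulVec y))
    (hb : ¬ ∃ y : Fin d → ℝ, A.mulVec y = b)
    (r : Fin d → ℝ) (hr : r = b - A.mulVec (x g)) :
    r ≠ 0 ∧ A.mulVec r = 0 ∧ r ⬝ᵥ A.mulVec r = 0 := by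
  have hstab := Krylov_succ_eq_of_finrank A b hgrade
  have hxK := hmem g le_rfl
  have hrK : r ∈ Krylov A b g := by
    rw [hr, ← hstab]
    exact Submodule.sub_mem _ (self_mem_Krylov_succ A b g) (mulVec_mem_Krylov_succ A b hxK)
  have hcurv : r ⬝ᵥ A.mulVec r = 0 := by
    subst hr
    exact dotProduct_mulVec_eq_zero_of_forall_enorm_le A b hxK (hmin g le_rfl) hrK
  have hAr : A.mulVec r = 0 := (hA.dotProduct_mulVec_zero_iff r).mp (by simpa using hcurv)
  have hr0 : r ≠ 0 := fun h0 => hb ⟨x g, (sub_eq_zero.mp (hr ▸ h0)).symm⟩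
  exact ⟨hr0, hAr, hcurv⟩
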